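/- Let p ≥ 7 be prime. Then Σ_{k=1}^{(p-1)/2} 2^k/k ≡ (2 - Q_p)/p (mod p ℤ_p), where Q_p is the p-th companion Pell number. -/

import Mathlib

/-- The companion Pell sequence: `Q 0 = 2`, `Q 1 = 2`, `Q (i+2) = 2 * Q (i+1) + Q i`. -/
def pellQ : ℕ → ℕ
  | 0 => 2
  | 1 => 2
  | (i + 2) => 2 * pellQ (i + 1) + pellQ i

/-! Since `Q n = (1 + √2) ^ n + (1 - √2) ^ n`, the binomial theorem gives, for `p = 2m + 1`,
`2 - Q p = -∑_{k=1}^{m} 2^(k+1) C(p, 2k)`, and `2k C(p, 2k) = p C(p-1, 2k-1)` turns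
`(2 - Q p) / p` into `-∑ 2^k C(p-1, 2k-1) / k`. As `C(p-1, j) ≡ (-1)^j (mod p)`, the difference
with `∑ 2^k / k` is `∑ 2^k (1 + C(p-1, 2k-1)) / k`, whose summands lie in `p ℤ_p`. -/

open Finset Zsqrtd

theorem Finset.sum_range_two_mul {M : Type*} [AddCommMonoid M] (f : ℕ → M) (n : ℕ) :
    ∑ k ∈ range (2 * n), f k = ∑ j ∈ range n, (f (2 * j) + f (2 * j + 1)) := by
  induction n with
  | zero => simp
  | succ n ih => rw [mul_add_one, sum_range_succ, sum_range_succ, sum_range_succ, ih, add_assoc]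

lemma pellQ_cast_zsqrtd : ∀ n : ℕ, (pellQ n : ℤ√2) = (1 + sqrtd) ^ n + (1 - sqrtd) ^ n
  | 0 => by norm_num [pellQ]
  | 1 => by norm_num [pellQ]
  | n + 2 => by
    have hsq : (sqrtd : ℤ√2) * sqrtd = 2 := by exact_mod_cast dmuld
    rw [pellQ, Nat.cast_add, Nat.cast_mul, pellQ_cast_zsqrtd (n + 1), pellQ_cast_zsqrtd n]
    linear_combination (-((1 + sqrtd : ℤ√2) ^ n + (1 - sqrtd) ^ n)) * hsq

lemma pellQ_two_mul_add_one (m : ℕ) :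
    (pellQ (2 * m + 1) : ℤ) =
      ∑ j ∈ range (m + 1), 2 ^ (j + 1) * ((2 * m + 1).choose (2 * j) : ℤ) := by
  have hsq : (sqrtd : ℤ√2) ^ 2 = 2 := by rw [sq]; exact_mod_cast dmuld
  suffices (pellQ (2 * m + 1) : ℤ√2) =
      ∑ j ∈ range (m + 1), 2 ^ (j + 1) * ((2 * m + 1).choose (2 * j) : ℤ√2) by
    exact_mod_cast this
  rw [pellQ_cast_zsqrtd, add_comm 1, sub_eq_neg_add, add_pow, add_pow, ← sum_add_distrib,
    show 2 * m + 1 + 1 = 2 * (m + 1) by ring, sum_range_two_mul]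
  refine sum_congr rfl fun j _ => ?_
  simp only [one_pow, mul_one, (even_two_mul j).neg_pow, (odd_two_mul_add_one j).neg_pow, pow_succ,
    pow_mul, hsq]
  ring

lemma two_sub_pellQ_two_mul_add_one (m : ℕ) :
    (2 - pellQ (2 * m + 1) : ℤ) =
      -∑ k ∈ Icc 1 m, 2 ^ (k + 1) * ((2 * m + 1).choose (2 * k) : ℤ) := by
  rw [pellQ_two_mul_add_one, range_eq_Ico, sum_eq_sum_Ico_succ_bot m.succ_pos]
  simp [Ico_add_one_right_eq_Icc]

lemma Nat.Prime.cast_choose_sub_one {p j : ℕ} (hp : p.Prime) (hj : j < p) :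
    ((p - 1).choose j : ZMod p) = (-1) ^ j := by
  -- Modulo `p`, only the `i = 0` term of `∑_{i ≤ j} (-1)^i C(p, i) = (-1)^j C(p-1, j)` survives.
  have h := congr_arg (Int.cast : ℤ → ZMod p)
    (Int.alternating_sum_range_choose_eq_choose (n := p - 1) (m := j))
  rw [Nat.sub_add_cancel hp.one_le, sum_range_succ'] at h
  push_cast [Nat.choose_zero_right] at h
  rw [sum_eq_zero fun k hk => by
    rw [(ZMod.natCast_eq_zero_iff _ _).2 (hp.dvd_choose_self k.succ_ne_zero (by simp at hk; omega)),
      mul_zero]] at h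
  have h1 : ((-1 : ZMod p) ^ j) ^ 2 = 1 := by rw [← pow_mul, mul_comm, pow_mul]; simp
  linear_combination -(-1 : ZMod p) ^ j * h - ((p - 1).choose j : ZMod p) * h1

lemma Nat.Prime.dvd_one_add_choose_sub_one {p j : ℕ} (hp : p.Prime) (hj : j < p) (hodd : Odd j) :
    p ∣ 1 + (p - 1).choose j := by
  rw [← ZMod.natCast_eq_zero_iff, Nat.cast_add, hp.cast_choose_sub_one hj, hodd.neg_one_pow]
  ring

lemma cast_two_sub_pellQ_div {K : Type*} [Field K] [CharZero K] {p m : ℕ} (hp : p.Prime)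
    (hm : p = 2 * m + 1) :
    (((2 - pellQ p) / p : ℤ) : K) =
      -∑ k ∈ Icc 1 m, 2 ^ k * ((p - 1).choose (2 * k - 1) : K) / k := by
  subst hm
  have hdvd : ((2 * m + 1 : ℕ) : ℤ) ∣ 2 - pellQ (2 * m + 1) := by
    rw [two_sub_pellQ_two_mul_add_one]
    refine (dvd_sum fun k hk => dvd_mul_of_dvd_right (Int.natCast_dvd_natCast.2 ?_) _).neg_right
    rw [mem_Icc] at hk
    exact hp.dvd_choose_self (by omega) (by omega)
  rw [Int.cast_div hdvd (by exact_mod_cast hp.ne_zero), two_sub_pellQ_two_mul_add_one]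
  push_cast
  rw [neg_div, sum_div]
  refine congrArg _ (sum_congr rfl fun k hk => ?_)
  rw [mem_Icc] at hk
  have hk0 : (k : K) ≠ 0 := by exact_mod_cast (show k ≠ 0 by omega)
  have hp0 : (2 * m + 1 : K) ≠ 0 := by exact_mod_cast hp.ne_zero
  have hchoose := Nat.add_one_mul_choose_eq (2 * m) (2 * k - 1)
  rw [Nat.sub_add_cancel (by omega)] at hchoose
  have hcast : ((2 * m + 1 : ℕ) : K) * ((2 * m).choose (2 * k - 1) : ℕ) =
      ((2 * m + 1).choose (2 * k) : ℕ) * (2 * k) := by exact_mod_cast hchoose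
  push_cast at hcast ⊢
  field_simp
  linear_combination -(2 : K) ^ k * hcast

theorem Padic.exists_eq_p_mul_of_norm_le {p : ℕ} [hp : Fact p.Prime] {x : ℚ_[p]}
    (hx : ‖x‖ ≤ ‖(p : ℚ_[p])‖) : ∃ z : ℤ_[p], x = p * z := by
  have hp0 : (p : ℚ_[p]) ≠ 0 := by exact_mod_cast hp.out.ne_zero
  refine ⟨⟨x / p, ?_⟩, ?_⟩
  · rw [norm_div]
    exact div_le_one_of_le₀ hx (norm_nonneg _)
  · simp [mul_div_cancel₀ _ hp0]

theorem Padic.norm_mul_natCast_div_natCast_le {p : ℕ} [Fact p.Prime] {x : ℚ_[p]} (hx : ‖x‖ ≤ 1)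
    {n k : ℕ} (hn : p ∣ n) (hk : p.Coprime k) : ‖x * n / k‖ ≤ ‖(p : ℚ_[p])‖ := by
  obtain ⟨c, rfl⟩ := hn
  rw [norm_div, norm_natCast_eq_one_iff.2 hk, div_one, Nat.cast_mul, _root_.norm_mul,
    _root_.norm_mul, mul_left_comm]
  exact mul_le_of_le_one_right (norm_nonneg _)
    (mul_le_one₀ hx (norm_nonneg _) (IsUltrametricDist.norm_natCast_le_one ℚ_[p] c))

theorem sum_two_pow_div_congr (p : ℕ) [hp : Fact p.Prime] (h7 : 7 ≤ p) :
    ∃ z : ℤ_[p],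
      (∑ k ∈ Finset.Icc 1 ((p - 1) / 2), (2 : ℚ_[p]) ^ k / (k : ℚ_[p])) -
          (((2 - (pellQ p : ℤ)) / (p : ℤ) : ℤ) : ℚ_[p]) =
        (p : ℚ_[p]) * (z : ℚ_[p]) := by
  obtain ⟨m, hm⟩ : Odd p := hp.out.odd_of_ne_two (by omega)
  rw [show (p - 1) / 2 = m by omega, cast_two_sub_pellQ_div hp.out hm, sub_neg_eq_add,
    ← sum_add_distrib]
  refine Padic.exists_eq_p_mul_of_norm_le <|
    IsUltrametricDist.norm_sum_le_of_forall_le_of_nonneg (norm_nonneg _) fun k hk => ?_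
  rw [mem_Icc] at hk
  have hdvd : p ∣ 1 + (p - 1).choose (2 * k - 1) :=
    hp.out.dvd_one_add_choose_sub_one (by omega) ⟨k - 1, by omega⟩
  have hcop : p.Coprime k :=
    (Nat.Prime.coprime_iff_not_dvd hp.out).2 (Nat.not_dvd_of_pos_of_lt (by omega) (by omega))
  have hpow : ‖(2 : ℚ_[p]) ^ k‖ ≤ 1 := by
    simpa using IsUltrametricDist.norm_natCast_le_one ℚ_[p] (2 ^ k)
  rw [← add_div, ← mul_one_add,
    show (1 : ℚ_[p]) + _ = ((1 + (p - 1).choose (2 * k - 1) : ℕ) : ℚ_[p]) by push_cast; rfl]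
  exact Padic.norm_mul_natCast_div_natCast_le hpow hdvd hcop
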